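/- arXiv:1903.02963 — 3 statements merged into one kernel-verified Lean document; each statement's English description precedes it below -/
import Mathlib

section
/- Let A be a unital C*-algebra and let f : A × A → A be a ℂ-linear map that is positive (if 0 ≤ a and 0 ≤ b then 0 ≤ f(a,b)), unital (f(1,1) = 1), and satisfies f(a,a) = a for all a ∈ A. Then for all a, b, c, d ∈ A one has a * f(c,d) * b = f(a*c*b, a*d*b). -/
section TomiyamaAux

open Finset in
/-- Hat function at grid point `i` with spacing `δ`. -/
noncomputable def tomHat (δ : ℝ) (i : ℤ) (x : ℝ) : ℝ := max (1 - |x/δ - i|) 0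

lemma tomHat_nonneg (δ : ℝ) (i : ℤ) (x : ℝ) : 0 ≤ tomHat δ i x := le_max_right _ _

lemma tomHat_continuous (δ : ℝ) (i : ℤ) : Continuous (tomHat δ i) := by
  unfold tomHat; fun_prop

/-- Weighted sums of hat functions evaluate as linear interpolation. -/
lemma tomHat_sum (δ : ℝ) (hδ : 0 < δ) (N : ℕ) (w : ℤ → ℝ) (x : ℝ)
    (hx : |x| ≤ δ * ((N : ℝ) - 1)) :
    ∑ i ∈ Finset.Icc (-(N:ℤ)) N, w i * tomHat δ i x
      = w ⌊x/δ⌋ * (1 - Int.fract (x/δ)) + w (⌊x/δ⌋ + 1) * Int.fract (x/δ) := by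
  set s := x / δ with hs
  set k := ⌊s⌋ with hk
  set u := Int.fract s with hu
  have hu0 : 0 ≤ u := Int.fract_nonneg _
  have hu1 : u < 1 := Int.fract_lt_one _
  have hks : (k : ℝ) + u = s := by rw [hk, hu]; exact Int.floor_add_fract s
  have hsN : |s| ≤ (N : ℝ) - 1 := by
    rw [hs, abs_div, abs_of_pos hδ]
    rw [div_le_iff₀ hδ]
    linarith [hx]
  have hsl : -((N:ℝ) - 1) ≤ s := neg_le_of_abs_le hsN
  have hsr : s ≤ (N:ℝ) - 1 := le_of_abs_le hsN
  have hk1 : -(N:ℤ) ≤ k := by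
    rw [hk, Int.le_floor]; push_cast; linarith
  have hk2 : k + 1 ≤ (N:ℤ) := by
    have : k ≤ (N:ℤ) - 1 := by
      rw [hk]
      have : ((N:ℤ) - 1 : ℤ) = ⌊((N:ℝ) - 1 : ℝ)⌋ := by
        rw [show ((N:ℝ) - 1 : ℝ) = (((N:ℤ) - 1 : ℤ) : ℝ) by push_cast; ring, Int.floor_intCast]
      rw [this]
      exact Int.floor_le_floor hsr
    omega
  have hvk : tomHat δ k x = 1 - u := by
    unfold tomHat
    rw [← hs]
    have : s - (k:ℝ) = u := by linarith
    rw [this, abs_of_nonneg hu0]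
    exact max_eq_left (by linarith)
  have hvk1 : tomHat δ (k+1) x = u := by
    unfold tomHat
    rw [← hs]
    have h1 : s - ((k+1 : ℤ):ℝ) = u - 1 := by push_cast; linarith
    rw [h1, abs_of_nonpos (by linarith)]
    have : (1 : ℝ) - -(u - 1) = u := by ring
    rw [this]
    exact max_eq_left hu0
  have hsub : ({k, k+1} : Finset ℤ) ⊆ Finset.Icc (-(N:ℤ)) N := by
    intro i hi
    simp only [Finset.mem_insert, Finset.mem_singleton] at hi
    rw [Finset.mem_Icc]
    rcases hi with h | h <;> omega
  have hzero : ∀ i ∈ Finset.Icc (-(N:ℤ)) N, i ∉ ({k, k+1} : Finset ℤ) →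
      w i * tomHat δ i x = 0 := by
    intro i _ hi
    simp only [Finset.mem_insert, Finset.mem_singleton, not_or] at hi
    have : tomHat δ i x = 0 := by
      unfold tomHat
      rw [← hs]
      apply max_eq_right
      have h1 : (1:ℝ) ≤ |s - i| := by
        rcases lt_or_gt_of_ne hi.1 with h | h
        · have hik : (i : ℝ) ≤ (k:ℝ) - 1 := by
            have : i ≤ k - 1 := by omega
            have h2 : (i:ℝ) ≤ ((k - 1 : ℤ) : ℝ) := by exact_mod_cast this
            push_cast at h2; linarith
          calc (1:ℝ) ≤ s - i := by linarith
          _ ≤ |s - i| := le_abs_self _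
        · have hik : (k:ℝ) + 2 ≤ (i:ℝ) := by
            have : k + 2 ≤ i := by omega
            have h2 : ((k + 2 : ℤ) : ℝ) ≤ (i:ℝ) := by exact_mod_cast this
            push_cast at h2; linarith
          calc (1:ℝ) ≤ -(s - i) := by linarith
          _ ≤ |s - i| := neg_le_abs _
      linarith
    rw [this, mul_zero]
  rw [← Finset.sum_subset hsub hzero, Finset.sum_pair (by omega)]
  rw [hvk, hvk1]

variable {A : Type*} [CStarAlgebra A] [PartialOrder A] [StarOrderedRing A] [Nontrivial A]

lemma tomCfc_sum (c : A) (hc : IsSelfAdjoint c) (δ : ℝ) (N : ℕ) (w : ℤ → ℝ) :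
    ∑ i ∈ Finset.Icc (-(N:ℤ)) N, (w i) • cfc (tomHat δ i) c
      = cfc (fun x => ∑ i ∈ Finset.Icc (-(N:ℤ)) N, w i * tomHat δ i x) c := by
  have hcont : ∀ i ∈ Finset.Icc (-(N:ℤ)) N,
      ContinuousOn (fun x => w i * tomHat δ i x) (spectrum ℝ c) :=
    fun i _ => (continuous_const.mul (tomHat_continuous δ i)).continuousOn
  calc ∑ i ∈ Finset.Icc (-(N:ℤ)) N, (w i) • cfc (tomHat δ i) c
      = ∑ i ∈ Finset.Icc (-(N:ℤ)) N, cfc (fun x => w i * tomHat δ i x) c :=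
        Finset.sum_congr rfl fun i _ => (cfc_const_mul (w i) (tomHat δ i) c
          (tomHat_continuous δ i).continuousOn).symm
    _ = cfc (∑ i ∈ Finset.Icc (-(N:ℤ)) N, fun x => w i * tomHat δ i x) c :=
        (cfc_sum _ c _ hcont).symm
    _ = cfc (fun x => ∑ i ∈ Finset.Icc (-(N:ℤ)) N, w i * tomHat δ i x) c := by
        congr 1
        ext x
        simp [Finset.sum_apply]

lemma tomApprox (c : A) (hc : IsSelfAdjoint c) {δ : ℝ} (hδ : 0 < δ) {N : ℕ}
    (hN : ‖c‖ ≤ δ * ((N : ℝ) - 1)) :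
    (∀ i : ℤ, 0 ≤ cfc (tomHat δ i) c) ∧
    ∑ i ∈ Finset.Icc (-(N:ℤ)) N, cfc (tomHat δ i) c = 1 ∧
    ∑ i ∈ Finset.Icc (-(N:ℤ)) N, ((i:ℝ)*δ) • cfc (tomHat δ i) c = c ∧
    c^2 ≤ ∑ i ∈ Finset.Icc (-(N:ℤ)) N, (((i:ℝ)*δ)^2) • cfc (tomHat δ i) c ∧
    ∑ i ∈ Finset.Icc (-(N:ℤ)) N, (((i:ℝ)*δ)^2) • cfc (tomHat δ i) c ≤ c^2 + δ^2 • 1 := by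
  have hspec : ∀ x ∈ spectrum ℝ c, |x| ≤ δ * ((N:ℝ) - 1) := fun x hx => by
    have := spectrum.norm_le_norm_of_mem hx
    rw [Real.norm_eq_abs] at this
    exact this.trans hN
  -- basic decomposition facts at a spectrum point
  have hpt : ∀ x ∈ spectrum ℝ c, x = δ * ((⌊x/δ⌋ : ℝ) + Int.fract (x/δ)) := by
    intro x _
    rw [Int.floor_add_fract, mul_div_cancel₀ x hδ.ne']
  refine ⟨fun i => cfc_nonneg (fun x _ => tomHat_nonneg δ i x), ?_, ?_, ?_, ?_⟩
  · have h1 : ∑ i ∈ Finset.Icc (-(N:ℤ)) N, cfc (tomHat δ i) c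
        = ∑ i ∈ Finset.Icc (-(N:ℤ)) N, ((1:ℝ)) • cfc (tomHat δ i) c := by
      simp
    rw [h1, tomCfc_sum c hc δ N (fun _ => 1)]
    have : cfc (fun x => ∑ i ∈ Finset.Icc (-(N:ℤ)) N, (1:ℝ) * tomHat δ i x) c
        = cfc (fun _ : ℝ => (1:ℝ)) c := by
      apply cfc_congr
      intro x hx
      dsimp only
      rw [tomHat_sum δ hδ N _ x (hspec x hx)]
      ring
    rw [this, cfc_const 1 c, map_one]
  · rw [tomCfc_sum c hc δ N (fun i => (i:ℝ)*δ)]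
    have : cfc (fun x => ∑ i ∈ Finset.Icc (-(N:ℤ)) N, ((i:ℝ)*δ) * tomHat δ i x) c
        = cfc (fun x : ℝ => x) c := by
      apply cfc_congr
      intro x hx
      dsimp only
      rw [tomHat_sum δ hδ N _ x (hspec x hx)]
      have hx' := hpt x hx
      push_cast
      nlinarith [hx']
    rw [this, cfc_id' ℝ c]
  · rw [tomCfc_sum c hc δ N (fun i => ((i:ℝ)*δ)^2)]
    rw [← cfc_pow_id (R := ℝ) c 2]
    apply cfc_mono
    · intro x hx
      rw [tomHat_sum δ hδ N _ x (hspec x hx)]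
      have hu0 : 0 ≤ Int.fract (x/δ) := Int.fract_nonneg _
      have hu1 : Int.fract (x/δ) < 1 := Int.fract_lt_one _
      push_cast
      set u := Int.fract (x/δ) with hu
      set k : ℝ := ((⌊x / δ⌋ : ℤ) : ℝ) with hkdef
      have hx2 : x ^ 2 = δ^2 * (k + u)^2 := by rw [hpt x hx]; ring
      nlinarith [hx2, mul_nonneg (mul_nonneg (sq_nonneg δ) hu0) (by linarith : (0:ℝ) ≤ 1 - u)]
    · exact (continuous_pow 2).continuousOn
    · exact Continuous.continuousOn (by
        exact continuous_finset_sum _ fun i _ => continuous_const.mul (tomHat_continuous δ i))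
  · rw [tomCfc_sum c hc δ N (fun i => ((i:ℝ)*δ)^2)]
    have hδ1 : δ^2 • (1:A) = algebraMap ℝ A (δ^2) := (Algebra.algebraMap_eq_smul_one _).symm
    rw [hδ1, ← cfc_pow_id (R := ℝ) c 2, ← cfc_add_const (δ^2) (fun x : ℝ => x^2) c
      ((continuous_pow 2).continuousOn)]
    apply cfc_mono
    · intro x hx
      rw [tomHat_sum δ hδ N _ x (hspec x hx)]
      have hu0 : 0 ≤ Int.fract (x/δ) := Int.fract_nonneg _
      have hu1 : Int.fract (x/δ) < 1 := Int.fract_lt_one _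
      push_cast
      set u := Int.fract (x/δ) with hu
      set k : ℝ := ((⌊x / δ⌋ : ℤ) : ℝ) with hkdef
      have hx2 : x ^ 2 = δ^2 * (k + u)^2 := by rw [hpt x hx]; ring
      nlinarith [hx2, sq_nonneg (δ*u), mul_nonneg (sq_nonneg δ) (by linarith : (0:ℝ) ≤ 1 - u)]
    · exact Continuous.continuousOn (by
        exact continuous_finset_sum _ fun i _ => continuous_const.mul (tomHat_continuous δ i))
    · exact ((continuous_pow 2).add continuous_const).continuousOn

open Filter Topology in
lemma tomLimit {x y z : A} (h : ∀ ε : ℝ, 0 < ε → x ≤ y + ε • z) : x ≤ y := by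
  have h0 : Tendsto (fun n : ℕ => (1/((n:ℝ)+1) : ℝ)) atTop (nhds 0) :=
    tendsto_one_div_add_atTop_nhds_zero_nat
  have ht : Tendsto (fun n : ℕ => y + (1/((n:ℝ)+1) : ℝ) • z) atTop (nhds y) := by
    have := tendsto_const_nhds (x := y) (f := atTop (α := ℕ)) |>.add (h0.smul_const z)
    simpa using this
  refine ge_of_tendsto ht (Filter.Eventually.of_forall fun n => h _ ?_)
  positivity

lemma tomSOS {ι : Type} (s : Finset ι) (t : ι → ℝ) (p : ι → A)
    (hp : ∀ i ∈ s, 0 ≤ p i) (hsum : ∑ i ∈ s, p i = 1) :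
    (∑ i ∈ s, t i • p i)^2 ≤ ∑ i ∈ s, (t i)^2 • p i := by
  set S := ∑ i ∈ s, t i • p i with hS
  have hSsa : star S = S := by
    rw [hS, star_sum]
    refine Finset.sum_congr rfl fun i hi => ?_
    rw [star_smul, star_trivial, (IsSelfAdjoint.of_nonneg (hp i hi)).star_eq]
  set q : ι → A := fun i => CFC.sqrt (p i) with hq
  have hqsq : ∀ i ∈ s, q i * q i = p i := fun i hi => CFC.sqrt_mul_sqrt_self (p i) (hp i hi)
  have hqsa : ∀ i, star (q i) = q i := fun i =>
    (IsSelfAdjoint.of_nonneg (CFC.sqrt_nonneg _)).star_eq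
  have aux0 : ∀ (τ : ℝ) (Q P SS : A), Q * Q = P →
      (τ • Q - SS * Q) * (τ • Q - Q * SS)
        = τ^2 • P - τ • (P * SS) - τ • (SS * P) + SS * P * SS := by
    intro τ Q P SS hQ
    have h1 : (τ•Q) * (τ•Q) = τ^2 • (Q*Q) := by rw [smul_mul_smul_comm, ← pow_two]
    have h2 : (τ•Q) * (Q*SS) = τ • ((Q*Q)*SS) := by rw [smul_mul_assoc, mul_assoc]
    have h3 : (SS*Q) * (τ•Q) = τ • (SS*(Q*Q)) := by rw [mul_smul_comm, mul_assoc]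
    have h4 : (SS*Q) * (Q*SS) = SS*(Q*Q)*SS := by simp only [mul_assoc]
    calc (τ • Q - SS * Q) * (τ • Q - Q * SS)
        = (τ•Q) * (τ•Q) - (τ•Q) * (Q*SS) - ((SS*Q) * (τ•Q) - (SS*Q) * (Q*SS)) := by
          rw [sub_mul, mul_sub, mul_sub]
      _ = τ^2 • P - τ • (P * SS) - τ • (SS * P) + SS * P * SS := by
          rw [h1, h2, h3, h4, hQ]; abel
  have key : ∑ i ∈ s, star (t i • q i - q i * S) * (t i • q i - q i * S)
      = (∑ i ∈ s, (t i)^2 • p i) - S^2 := by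
    have expand : ∀ i ∈ s, star (t i • q i - q i * S) * (t i • q i - q i * S)
        = (t i)^2 • p i - t i • (p i * S) - t i • (S * p i) + S * p i * S := by
      intro i hi
      rw [star_sub, star_smul, star_trivial, hqsa, star_mul, hSsa, hqsa]
      exact aux0 (t i) (q i) (p i) S (hqsq i hi)
    have e1 : ∑ i ∈ s, t i • (p i * S) = S * S := by
      rw [show S * S = (∑ i ∈ s, t i • p i) * S from by rw [← hS]]
      rw [Finset.sum_mul]
      exact (Finset.sum_congr rfl fun i _ => by rw [smul_mul_assoc]).symm
    have e2 : ∑ i ∈ s, t i • (S * p i) = S * S := by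
      rw [show S * S = S * (∑ i ∈ s, t i • p i) from by rw [← hS]]
      rw [Finset.mul_sum]
      exact (Finset.sum_congr rfl fun i _ => by rw [mul_smul_comm]).symm
    have e3 : ∑ i ∈ s, S * p i * S = S * S := by
      calc ∑ i ∈ s, S * p i * S = S * ∑ i ∈ s, p i * S := by
            simp only [mul_assoc]; exact (Finset.mul_sum _ _ _).symm
        _ = S * ((∑ i ∈ s, p i) * S) := congrArg (fun y => S * y) (Finset.sum_mul _ _ _).symm
        _ = S * S := by rw [hsum, one_mul]
    rw [Finset.sum_congr rfl expand, Finset.sum_add_distrib, Finset.sum_sub_distrib,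
      Finset.sum_sub_distrib, e1, e2, e3, pow_two]
    abel
  have pos : 0 ≤ (∑ i ∈ s, (t i)^2 • p i) - S^2 := by
    rw [← key]
    exact Finset.sum_nonneg fun i _ => star_mul_self_nonneg _
  exact sub_nonneg.mp pos

lemma tomKadison (f : A × A →ₗ[ℂ] A)
    (hpos : ∀ a b : A, 0 ≤ a → 0 ≤ b → 0 ≤ f (a, b)) (hunital : f (1, 1) = 1)
    (c d : A) (hc : IsSelfAdjoint c) (hd : IsSelfAdjoint d) :
    (f (c, d))^2 ≤ f (c^2, d^2) := by
  have claim : ∀ δ : ℝ, 0 < δ → (f (c, d))^2 ≤ f (c^2, d^2) + δ^2 • 1 := by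
    intro δ hδ
    obtain ⟨n, hn⟩ := exists_nat_ge ((max ‖c‖ ‖d‖)/δ + 1)
    have hNc : ‖c‖ ≤ δ * ((n:ℝ) - 1) := by
      have h1 : ‖c‖/δ + 1 ≤ (n:ℝ) := le_trans (by gcongr; exact le_max_left _ _) hn
      have h2 : ‖c‖/δ ≤ (n:ℝ) - 1 := by linarith
      rw [div_le_iff₀ hδ] at h2
      linarith [h2]
    have hNd : ‖d‖ ≤ δ * ((n:ℝ) - 1) := by
      have h1 : ‖d‖/δ + 1 ≤ (n:ℝ) := le_trans (by gcongr; exact le_max_right _ _) hn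
      have h2 : ‖d‖/δ ≤ (n:ℝ) - 1 := by linarith
      rw [div_le_iff₀ hδ] at h2
      linarith [h2]
    obtain ⟨hPpos, hP1, hPc, _, hPsq2⟩ := tomApprox c hc hδ hNc
    obtain ⟨hQpos, hQ1, hQd, _, hQsq2⟩ := tomApprox d hd hδ hNd
    set I : Finset ℤ := Finset.Icc (-(n:ℤ)) n with hI
    set P : ℤ → A := fun i => cfc (tomHat δ i) c with hP
    set Q : ℤ → A := fun i => cfc (tomHat δ i) d with hQ
    set p : ℤ → A := fun i => f (P i, Q i) with hpdef
    have hp : ∀ i ∈ I, 0 ≤ p i := fun i _ => hpos _ _ (hPpos i) (hQpos i)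
    have hpair : ∀ (w : ℤ → ℝ), ∑ i ∈ I, (w i) • p i
        = f (∑ i ∈ I, (w i) • P i, ∑ i ∈ I, (w i) • Q i) := by
      intro w
      rw [show (∑ i ∈ I, (w i) • P i, ∑ i ∈ I, (w i) • Q i)
            = ∑ i ∈ I, (w i) • ((P i, Q i) : A × A) from ?_, map_sum]
      · exact Finset.sum_congr rfl fun i _ => (LinearMap.map_smul_of_tower f (w i) _).symm
      · ext
        · simp [Prod.fst_sum]
        · simp [Prod.snd_sum]
    have hpsum : ∑ i ∈ I, p i = 1 := by
      have h := hpair (fun _ => 1)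
      simp only [one_smul] at h
      rw [h, hP1, hQ1, hunital]
    have hfs : ∑ i ∈ I, ((i:ℝ)*δ) • p i = f (c, d) := by
      rw [hpair (fun i => (i:ℝ)*δ), hPc, hQd]
    have hft : ∑ i ∈ I, (((i:ℝ)*δ)^2) • p i
        = f (∑ i ∈ I, (((i:ℝ)*δ)^2) • P i, ∑ i ∈ I, (((i:ℝ)*δ)^2) • Q i) :=
      hpair (fun i => ((i:ℝ)*δ)^2)
    have hsos := tomSOS I (fun i => (i:ℝ)*δ) p hp hpsum
    rw [hfs, hft] at hsos
    refine hsos.trans ?_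
    set u := ∑ i ∈ I, (((i:ℝ)*δ)^2) • P i with hu
    set v := ∑ i ∈ I, (((i:ℝ)*δ)^2) • Q i with hv
    have hmono := hpos (c^2 + δ^2 • 1 - u) (d^2 + δ^2 • 1 - v)
      (sub_nonneg.mpr hPsq2) (sub_nonneg.mpr hQsq2)
    have hsplit : ((c^2 + δ^2 • 1 - u, d^2 + δ^2 • 1 - v) : A × A)
        = ((c^2, d^2) : A × A) + δ^2 • ((1,1) : A × A) - (u, v) := by
      ext <;> simp
    rw [hsplit, map_sub, map_add, LinearMap.map_smul_of_tower, hunital] at hmono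
    rw [sub_nonneg] at hmono
    exact hmono
  apply tomLimit (z := (1:A))
  intro ε hε
  have := claim (Real.sqrt ε) (Real.sqrt_pos.mpr hε)
  rwa [Real.sq_sqrt hε.le] at this

lemma tomSmulNonneg {r : ℝ} (hr : 0 ≤ r) {y : A} (hy : 0 ≤ y) : 0 ≤ r • y := by
  have h1 : r • y = star ((Real.sqrt r) • CFC.sqrt y) * ((Real.sqrt r) • CFC.sqrt y) := by
    rw [star_smul, star_trivial, (IsSelfAdjoint.of_nonneg (CFC.sqrt_nonneg _)).star_eq,
      smul_mul_smul_comm, Real.mul_self_sqrt hr, CFC.sqrt_mul_sqrt_self y hy]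
  rw [h1]
  exact star_mul_self_nonneg _

lemma tomJordanSA (f : A × A →ₗ[ℂ] A)
    (hpos : ∀ a b : A, 0 ≤ a → 0 ≤ b → 0 ≤ f (a, b)) (hunital : f (1, 1) = 1)
    (hdiag : ∀ a : A, f (a, a) = a)
    (a : A) (ha : IsSelfAdjoint a)
    (c d : A) (hc : IsSelfAdjoint c) (hd : IsSelfAdjoint d) :
    f (a*c + c*a, a*d + d*a) = a * f (c, d) + f (c, d) * a := by
  set F := f (c, d) with hF
  set S := f (a*c + c*a, a*d + d*a) - (a * F + F * a) with hSdef
  set T := f (c^2, d^2) - F^2 with hTdef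
  have sq_expand : ∀ (x y : A) (l : ℝ), (x + l • y)^2
      = x^2 + l • (x*y + y*x) + (l^2) • y^2 := by
    intro x y l
    have h4 : (l•y)*(l•y) = (l^2) • (y*y) := by
      rw [smul_mul_smul_comm]; congr 1; exact (pow_two l).symm
    have h2 : x*(l•y) = l • (x*y) := mul_smul_comm l x y
    have h3 : (l•y)*x = l • (y*x) := smul_mul_assoc l y x
    calc (x + l•y)^2 = x*x + (x*(l•y) + (l•y)*x) + (l•y)*(l•y) := by
          rw [pow_two, add_mul, mul_add, mul_add]; abel
      _ = x^2 + l • (x*y + y*x) + (l^2) • y^2 := by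
          rw [h2, h3, h4, smul_add, ← pow_two x, ← pow_two y]
  have key : ∀ l : ℝ, 0 ≤ l • S + (l^2) • T := by
    intro l
    have hl : IsSelfAdjoint l := star_trivial l
    have hsac : IsSelfAdjoint (a + l • c) := ha.add (hl.smul hc)
    have hsad : IsSelfAdjoint (a + l • d) := ha.add (hl.smul hd)
    have hk := tomKadison f hpos hunital _ _ hsac hsad
    have hpair1 : ((a + l•c, a + l•d) : A × A) = ((a,a) : A×A) + l • ((c,d) : A×A) := by
      ext <;> simp
    have hL : f (a + l•c, a + l•d) = a + l • F := by
      rw [hpair1, map_add, LinearMap.map_smul_of_tower, hdiag a, hF]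
    have hpair2 : (((a + l•c)^2, (a + l•d)^2) : A × A)
        = ((a^2,a^2) : A×A) + l • ((a*c+c*a, a*d+d*a) : A×A) + (l^2) • ((c^2,d^2) : A×A) := by
      ext
      · simpa using sq_expand a c l
      · simpa using sq_expand a d l
    have hR : f ((a + l•c)^2, (a + l•d)^2)
        = a^2 + l • f (a*c+c*a, a*d+d*a) + (l^2) • f (c^2, d^2) := by
      rw [hpair2, map_add, map_add, LinearMap.map_smul_of_tower, LinearMap.map_smul_of_tower,
        hdiag]
    rw [hL, hR, sq_expand a F l] at hk
    have hdiff : (a^2 + l • f (a*c+c*a, a*d+d*a) + (l^2) • f (c^2,d^2))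
        - (a^2 + l • (a*F + F*a) + (l^2) • F^2) = l • S + (l^2) • T := by
      rw [hSdef, hTdef, smul_sub, smul_sub]; abel
    have h0 := sub_nonneg.mpr hk
    rw [hdiff] at h0
    exact h0
  have step : ∀ ε : ℝ, 0 < ε → 0 ≤ S + ε • T := by
    intro ε hε
    have h1 := key ε
    have h2 : ε • S + (ε^2) • T = ε • (S + ε • T) := by
      rw [smul_add, smul_smul, pow_two]
    rw [h2] at h1
    have h3 := tomSmulNonneg (inv_nonneg.mpr hε.le) h1
    rwa [smul_smul, inv_mul_cancel₀ hε.ne', one_smul] at h3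
  have step' : ∀ ε : ℝ, 0 < ε → S ≤ ε • T := by
    intro ε hε
    have h1 := key (-ε)
    have h2 : (-ε) • S + ((-ε)^2) • T = ε • (-S + ε • T) := by
      rw [smul_add, smul_smul, neg_smul, ← smul_neg]
      congr 1
      ring_nf
    rw [h2] at h1
    have h3 := tomSmulNonneg (inv_nonneg.mpr hε.le) h1
    rw [smul_smul, inv_mul_cancel₀ hε.ne', one_smul] at h3
    exact sub_nonneg.mp (by rwa [neg_add_eq_sub] at h3)
  have hS1 : (0:A) ≤ S := tomLimit (fun ε hε => by simpa using step ε hε)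
  have hS2 : S ≤ 0 := tomLimit (fun ε hε => by simpa using step' ε hε)
  have : S = 0 := le_antisymm hS2 hS1
  rw [hSdef, sub_eq_zero] at this
  exact this

lemma tomCentral (e : A) (he : IsSelfAdjoint e)
    (hkey : ∀ a : A, IsSelfAdjoint a → a*a*e + e*(a*a) = a*e*a + a*e*a) :
    ∀ a : A, IsSelfAdjoint a → e * a = a * e := by
  intro a ha
  set t := a*e - e*a with ht
  have hta : a * t = t * a := by
    have h := hkey a ha
    have h2 : a*t - t*a = (a*a*e + e*(a*a)) - (a*e*a + a*e*a) := by
      rw [ht]; noncomm_ring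
    rw [h, sub_self] at h2
    exact sub_eq_zero.mp h2
  have hte : e * t = t * e := by
    have h1 := hkey a ha
    have h2 := hkey (a+e) (ha.add he)
    have h3 : e*t - t*e = ((a+e)*(a+e)*e + e*((a+e)*(a+e)) - ((a+e)*e*(a+e) + (a+e)*e*(a+e)))
        - (a*a*e + e*(a*a) - (a*e*a + a*e*a)) := by
      rw [ht]; noncomm_ring
    rw [h1, h2, sub_self, sub_self, sub_zero] at h3
    exact sub_eq_zero.mp h3
  -- powers of e
  have hae : a*e = e*a + t := by rw [ht]; abel
  have hpow : ∀ n : ℕ, a * e^(n+1) = e^(n+1) * a + (n+1) • (e^n * t) := by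
    intro n
    induction n with
    | zero => simpa [pow_one, pow_zero] using hae
    | succ n ih =>
      calc a * e^(n+2) = (a * e^(n+1)) * e := by rw [pow_succ, ← mul_assoc]
        _ = (e^(n+1) * a) * e + (n+1) • ((e^n * t) * e) := by
            rw [ih, add_mul, smul_mul_assoc]
        _ = e^(n+1) * (a * e) + (n+1) • (e^n * (t * e)) := by rw [mul_assoc, mul_assoc]
        _ = e^(n+1) * (e * a) + e^(n+1) * t + (n+1) • (e^n * (e * t)) := by
            rw [hae, mul_add, hte]
        _ = e^(n+2) * a + (n+2) • (e^(n+1) * t) := by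
            have e1 : e^(n+1) * (e*a) = e^(n+2) * a := by rw [← mul_assoc, ← pow_succ]
            have e2 : e^n * (e*t) = e^(n+1) * t := by rw [← mul_assoc, ← pow_succ]
            rw [e1, e2, succ_nsmul (e^(n+1)*t) (n+1)]
            abel
  -- iterated commutator with a
  set D : A → A := fun x => a * x - x * a with hD
  have hDapp : ∀ x, D x = a * x - x * a := fun x => rfl
  have hDsmul : ∀ (m : ℕ) (y : A), D (m • y) = m • D y := by
    intro m y
    rw [hDapp, hDapp, mul_smul_comm, smul_mul_assoc, smul_sub]
  have hta' : Commute a t := hta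
  have hte' : Commute e t := hte
  have hDiter : ∀ k n : ℕ, D^[k] (e^(n+k)) = ((n+k).descFactorial k) • (t^k * e^n) := by
    intro k
    induction k with
    | zero => intro n; simp
    | succ k ihk =>
      intro n
      have hidx : e^(n+(k+1)) = e^((n+1)+k) := by
        congr 1
        omega
      rw [Function.iterate_succ_apply', hidx, ihk (n+1), hDsmul]
      have hDtk : D (t^k * e^(n+1)) = (n+1) • (t^(k+1) * e^n) := by
        have h1 : a * (t^k * e^(n+1)) = t^k * (a * e^(n+1)) := by
          rw [← mul_assoc, (hta'.pow_right k).eq, mul_assoc]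
        have h2 : (t^k * e^(n+1)) * a = t^k * (e^(n+1) * a) := mul_assoc _ _ _
        rw [hDapp, h1, h2, ← mul_sub, hpow n, add_sub_cancel_left, mul_smul_comm]
        congr 1
        rw [(hte'.pow_left n).eq, ← mul_assoc, ← pow_succ]
      rw [hDtk, smul_smul]
      congr 1
      have : (n+(k+1)) = ((n+1)+k) := by omega
      rw [this, Nat.descFactorial_succ]
      have : (n+1)+k-k = n+1 := by omega
      rw [this, Nat.mul_comm]
  have hfact : ∀ m : ℕ, D^[m] (e^m) = (m.factorial) • (t^m) := by
    intro m
    have h := hDiter m 0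
    simpa [Nat.descFactorial_self] using h
  -- norm estimates
  have hDnorm : ∀ x, ‖D x‖ ≤ (2*‖a‖) * ‖x‖ := by
    intro x
    rw [hDapp]
    calc ‖a*x - x*a‖ ≤ ‖a*x‖ + ‖x*a‖ := norm_sub_le _ _
      _ ≤ ‖a‖*‖x‖ + ‖x‖*‖a‖ := add_le_add (norm_mul_le _ _) (norm_mul_le _ _)
      _ = (2*‖a‖) * ‖x‖ := by ring
  have hDin : ∀ (m : ℕ) (x : A), ‖D^[m] x‖ ≤ (2*‖a‖)^m * ‖x‖ := by
    intro m
    induction m with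
    | zero => intro x; simp
    | succ m ih =>
      intro x
      rw [Function.iterate_succ_apply']
      calc ‖D (D^[m] x)‖ ≤ (2*‖a‖) * ‖D^[m] x‖ := hDnorm _
        _ ≤ (2*‖a‖) * ((2*‖a‖)^m * ‖x‖) := by
            apply mul_le_mul_of_nonneg_left (ih x) (by positivity)
        _ = (2*‖a‖)^(m+1) * ‖x‖ := by ring
  have htpow : ∀ m : ℕ, 0 < m → ((m.factorial : ℝ)) * ‖t^m‖ ≤ ((2*‖a‖)*‖e‖)^m := by
    intro m hm
    have h1 : ‖(m.factorial) • (t^m)‖ = (m.factorial : ℝ) * ‖t^m‖ := by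
      rw [← Nat.cast_smul_eq_nsmul ℝ, norm_smul, Real.norm_natCast]
    calc (m.factorial : ℝ) * ‖t^m‖ = ‖D^[m] (e^m)‖ := by rw [hfact m, h1]
      _ ≤ (2*‖a‖)^m * ‖e^m‖ := hDin m _
      _ ≤ (2*‖a‖)^m * ‖e‖^m := by
          apply mul_le_mul_of_nonneg_left (norm_pow_le' e hm) (by positivity)
      _ = ((2*‖a‖)*‖e‖)^m := by rw [mul_pow]; ring
  -- t is skew-adjoint, so its 2^k powers have multiplicative norms
  have hts : star t = -t := by
    rw [ht, star_sub, star_mul, star_mul, he.star_eq, ha.star_eq]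
    abel
  have hsqnorm : ∀ k : ℕ, ∀ s : A, IsSelfAdjoint s → ‖s^(2^k)‖ = ‖s‖^(2^k) := by
    intro k
    induction k with
    | zero => intro s _; simp
    | succ k ih =>
      intro s hs
      have h2 : s^(2^(k+1)) = (s^2)^(2^k) := by
        rw [← pow_mul]
        congr 1
        ring
      have h3 : ‖s^2‖ = ‖s‖^2 := by
        rw [pow_two]
        nth_rewrite 1 [← hs.star_eq]
        rw [CStarRing.norm_star_mul_self, pow_two]
      rw [h2, ih (s^2) (hs.pow 2), h3, ← pow_mul]
      congr 1
      ring
  have ht2sa : IsSelfAdjoint (t^2) := by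
    show star (t^2) = t^2
    rw [star_pow, hts, neg_sq]
  have htnorm2 : ∀ k : ℕ, ‖t^(2^(k+1))‖ = ‖t‖^(2^(k+1)) := by
    intro k
    have h2 : t^(2^(k+1)) = (t^2)^(2^k) := by
      rw [← pow_mul]
      congr 1
      ring
    have h4 : ‖t^2‖ = ‖t‖^2 := by
      rw [pow_two, show t * t = -(star t * t) from by rw [hts, neg_mul, neg_neg], norm_neg,
        CStarRing.norm_star_mul_self, pow_two]
    rw [h2, hsqnorm k (t^2) ht2sa, h4, ← pow_mul]
    congr 1
    ring
  -- conclude t = 0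
  have ht0 : t = 0 := by
    by_contra htne
    have hr : 0 < ‖t‖ := norm_pos_iff.mpr htne
    set q : ℝ := ((2*‖a‖)*‖e‖) / ‖t‖ with hq
    have hqk : ∀ k : ℕ, (((2^(k+1)).factorial : ℝ)) ≤ q^(2^(k+1)) := by
      intro k
      have hm : 0 < 2^(k+1) := by positivity
      have h1 := htpow (2^(k+1)) hm
      rw [htnorm2 k] at h1
      rw [hq, div_pow]
      rw [le_div_iff₀ (pow_pos hr _)]
      exact h1
    have hsumm := Real.summable_pow_div_factorial q
    have htend := hsumm.tendsto_atTop_zero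
    have hev := htend.eventually_lt_const one_pos
    obtain ⟨n₀, hn₀⟩ := Filter.eventually_atTop.mp hev
    have hm0 : n₀ ≤ 2^(n₀+1) :=
      (Nat.lt_two_pow_self (n := n₀)).le.trans (Nat.pow_le_pow_right (by norm_num) (Nat.le_succ n₀))
    have h1 := hn₀ (2^(n₀+1)) hm0
    have hfp : (0:ℝ) < ((2^(n₀+1)).factorial : ℝ) := by
      exact_mod_cast Nat.factorial_pos _
    rw [div_lt_one hfp] at h1
    have h2 := hqk n₀
    linarith
  have hz : a*e - e*a = 0 := by rw [← ht, ht0]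
  exact (sub_eq_zero.mp hz).symm


lemma tomDecomp (x : A) : ∃ x₁ x₂ : A, IsSelfAdjoint x₁ ∧ IsSelfAdjoint x₂ ∧
    x = x₁ + Complex.I • x₂ := by
  refine ⟨(2⁻¹:ℂ) • (x + star x), (-(2⁻¹) * Complex.I) • (x - star x), ?_, ?_, ?_⟩
  · show star _ = _
    rw [star_smul, star_add, star_star, add_comm (star x) x]
    congr 1
    simp [RCLike.conj_ofNat]
  · show star _ = _
    rw [star_smul, star_sub, star_star]
    have hc : star (-(2⁻¹) * Complex.I) = 2⁻¹ * Complex.I := by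
      rw [Complex.star_def]
      simp only [map_mul, map_neg, map_inv₀, Complex.conj_I, RCLike.conj_ofNat]
      ring
    rw [hc, show star x - x = -(x - star x) from (neg_sub _ _).symm, smul_neg, ← neg_smul]
    congr 1
    ring
  · rw [smul_smul, show Complex.I * (-(2⁻¹) * Complex.I) = (2⁻¹ : ℂ) from by
      linear_combination (-(2⁻¹):ℂ) * Complex.I_mul_I]
    rw [smul_add, smul_sub]
    module

lemma tomMain (f : A × A →ₗ[ℂ] A)
    (hpos : ∀ a b : A, 0 ≤ a → 0 ≤ b → 0 ≤ f (a, b))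
    (hunital : f (1, 1) = 1)
    (hdiag : ∀ a : A, f (a, a) = a) :
    ∀ a b c d : A, a * f (c, d) * b = f (a * c * b, a * d * b) := by
  set e := f (1, 0) with he_def
  have he0 : 0 ≤ e := hpos 1 0 zero_le_one le_rfl
  have he : IsSelfAdjoint e := .of_nonneg he0
  have h1sa : IsSelfAdjoint (1:A) := IsSelfAdjoint.one A
  have h0sa : IsSelfAdjoint (0:A) := IsSelfAdjoint.zero A
  have eq1 : ∀ a : A, IsSelfAdjoint a → f (a + a, 0) = a * e + e * a := by
    intro a ha
    have h := tomJordanSA f hpos hunital hdiag a ha 1 0 h1sa h0sa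
    simpa using h
  have hkey : ∀ a : A, IsSelfAdjoint a → a*a*e + e*(a*a) = a*e*a + a*e*a := by
    intro a ha
    have haa : IsSelfAdjoint (a*a) := by
      show star (a*a) = a*a
      rw [star_mul, ha.star_eq]
    have J2 := tomJordanSA f hpos hunital hdiag a ha (a+a) 0 (ha.add ha) h0sa
    have J3 := eq1 (a*a) haa
    rw [eq1 a ha] at J2
    have hl : ((a*(a+a) + (a+a)*a, a*0+0*a) : A × A)
        = ((a*a + a*a, 0) : A×A) + ((a*a + a*a, 0) : A×A) := by
      ext
      · simp only [Prod.fst_add]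
        noncomm_ring
      · simp
    rw [hl, map_add, J3] at J2
    have hexp : a*(a*e+e*a) + (a*e+e*a)*a = (a*a*e + e*(a*a)) + (a*e*a + a*e*a) := by
      noncomm_ring
    rw [hexp] at J2
    exact add_left_cancel J2
  have hcommSA := tomCentral e he hkey
  have hcomm : ∀ x : A, e * x = x * e := by
    intro x
    obtain ⟨x₁, x₂, hx1, hx2, hx⟩ := tomDecomp x
    rw [hx, mul_add, add_mul, hcommSA x₁ hx1, mul_smul_comm, smul_mul_assoc, hcommSA x₂ hx2]
  have hsmul2 : ∀ z : A, (2⁻¹:ℂ) • (z + z) = z := fun z => by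
    rw [← two_smul ℂ z, smul_smul]
    norm_num
  have hgSA : ∀ a : A, IsSelfAdjoint a → f (a, 0) = e * a := by
    intro a ha
    have h := eq1 a ha
    have hsplit : ((a+a, (0:A)) : A×A) = ((a,0) : A×A) + ((a,0):A×A) := by ext <;> simp
    rw [hsplit, map_add, ← hcommSA a ha] at h
    calc f ((a, (0:A)) : A × A) = (2⁻¹:ℂ) • (f ((a,(0:A)) : A×A) + f ((a,(0:A)) : A×A)) :=
          (hsmul2 _).symm
      _ = (2⁻¹:ℂ) • (e*a + e*a) := by rw [h]
      _ = e * a := hsmul2 _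
  have hg : ∀ x : A, f (x, 0) = e * x := by
    intro x
    obtain ⟨x₁, x₂, hx1, hx2, hx⟩ := tomDecomp x
    have hsplit : ((x, (0:A)) : A×A) = ((x₁,0) : A×A) + Complex.I • ((x₂,0) : A×A) := by
      rw [hx]; ext <;> simp
    rw [hsplit, map_add, map_smul, hgSA x₁ hx1, hgSA x₂ hx2, ← mul_smul_comm, ← mul_add, ← hx]
  have hfull : ∀ c d : A, f (c, d) = e * c + (d - e * d) := by
    intro c d
    have hsplit : ((c,d) : A×A) = ((c,0) : A×A) + (((d,d) : A×A) - ((d,0) : A×A)) := by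
      ext <;> simp
    rw [hsplit, map_add, map_sub, hg c, hg d, hdiag d]
  intro a b c d
  have h1 : ∀ u v : A, a * (e * u) * v = e * (a * u * v) := by
    intro u v
    rw [show a * (e*u) = (a*e)*u from (mul_assoc _ _ _).symm, ← hcomm a,
      mul_assoc e a u, mul_assoc e (a*u) v]
  rw [hfull c d, hfull (a*c*b) (a*d*b)]
  have expand : a * (e*c + (d - e*d)) * b = a*(e*c)*b + (a*d*b - a*(e*d)*b) := by noncomm_ring
  rw [expand, h1 c b, h1 d b]

end TomiyamaAux

/-- **Tomiyama-type identity.**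
Let `A` be a unital C*-algebra (with its canonical order) and let
`f : A × A → A` be a ℂ-linear map that is positive, unital, and satisfies
`f (a, a) = a` for all `a`. Then `a * f (c, d) * b = f (a*c*b, a*d*b)`
for all `a b c d : A`. -/
theorem stmt0 {A : Type*} [CStarAlgebra A] [PartialOrder A] [StarOrderedRing A]
    (f : A × A →ₗ[ℂ] A)
    (hpos : ∀ a b : A, 0 ≤ a → 0 ≤ b → 0 ≤ f (a, b))
    (hunital : f (1, 1) = 1)
    (hdiag : ∀ a : A, f (a, a) = a) :
    ∀ a b c d : A, a * f (c, d) * b = f (a * c * b, a * d * b) := by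
  rcases subsingleton_or_nontrivial A with hA | hA
  · intro a b c d
    exact Subsingleton.elim _ _
  · exact tomMain f hpos hunital hdiag
end

section
/- Let A be a unital C*-algebra and let f : A × A → A be a ℂ-linear map that is positive (if 0 ≤ a and 0 ≤ b then 0 ≤ f(a,b)), unital (f(1,1) = 1), and satisfies f(a,a) = a for all a ∈ A. Then the element p := f(1,0) is central in A (p * a = a * p for all a ∈ A), and f(a,b) = a*p + b*(1 - p) for all a, b ∈ A. -/
namespace Stmt1Aux
noncomputable section


/-- decreasing ramp: equals 1 for `n*t ≤ c-1`, 0 for `n*t ≥ c`. -/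
def R (n c : ℕ) (t : ℝ) : ℝ := max 0 (min 1 ((c : ℝ) - n * t))

/-- hat function peaked at `k/n`, supported on `[(k-1)/n, (k+1)/n]`. -/
def hat (n k : ℕ) (t : ℝ) : ℝ := R n (k + 1) t - R n k t

lemma R_continuous (n c : ℕ) : Continuous (R n c) := by
  unfold R
  exact continuous_const.max (continuous_const.min (by fun_prop))

lemma hat_continuous (n k : ℕ) : Continuous (hat n k) :=
  (R_continuous n (k+1)).sub (R_continuous n k)

lemma R_mono {n c c' : ℕ} (h : c ≤ c') (t : ℝ) : R n c t ≤ R n c' t := by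
  unfold R
  have : (c : ℝ) ≤ (c' : ℝ) := by exact_mod_cast h
  exact max_le_max le_rfl (min_le_min le_rfl (by linarith))

lemma R_nonneg (n c : ℕ) (t : ℝ) : 0 ≤ R n c t := le_max_left _ _

lemma R_le_one (n c : ℕ) (t : ℝ) : R n c t ≤ 1 :=
  max_le zero_le_one (min_le_left _ _)

lemma R_eq_one {n c : ℕ} {t : ℝ} (h : 1 ≤ (c : ℝ) - n * t) : R n c t = 1 := by
  unfold R
  rw [min_eq_left h, max_eq_right zero_le_one]

lemma R_eq_zero {n c : ℕ} {t : ℝ} (h : (c : ℝ) - n * t ≤ 0) : R n c t = 0 := by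
  unfold R
  rw [max_eq_left (le_trans (min_le_right _ _) h)]

lemma hat_nonneg (n k : ℕ) (t : ℝ) : 0 ≤ hat n k t :=
  sub_nonneg.mpr (R_mono (Nat.le_succ k) t)

lemma hat_le_one (n k : ℕ) (t : ℝ) : hat n k t ≤ 1 := by
  have h1 := R_le_one n (k + 1) t
  have h2 := R_nonneg n k t
  unfold hat; linarith

lemma hat_eq_zero_of_ge {n k : ℕ} {t : ℝ} (h : (k : ℝ) + 1 ≤ n * t) :
    hat n k t = 0 := by
  unfold hat
  rw [R_eq_zero (by push_cast; linarith), R_eq_zero (by linarith)]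
  ring

lemma hat_eq_zero_of_le {n k : ℕ} {t : ℝ} (h : n * t ≤ (k : ℝ) - 1) :
    hat n k t = 0 := by
  unfold hat
  rw [R_eq_one (by push_cast; linarith), R_eq_one (by linarith)]
  ring

/-- key support estimate -/
lemma abs_hat_mul_le {n k : ℕ} (hn : 1 ≤ n) (t : ℝ) :
    |t - (k : ℝ) / n| * hat n k t ≤ (1 / n) * hat n k t := by
  have hn' : (0 : ℝ) < n := by exact_mod_cast hn
  rcases le_or_gt ((k : ℝ) + 1) (n * t) with h | h
  · rw [hat_eq_zero_of_ge h]; simp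
  rcases le_or_gt (n * t) ((k : ℝ) - 1) with h' | h'
  · rw [hat_eq_zero_of_le h']; simp
  · apply mul_le_mul_of_nonneg_right _ (hat_nonneg n k t)
    rw [abs_le]
    constructor
    · rw [neg_le, neg_sub, sub_le_iff_le_add]
      rw [div_add' _ _ _ (ne_of_gt hn'), div_le_div_iff₀ hn' hn']
      nlinarith
    · rw [sub_le_iff_le_add, ← add_div, le_div_iff₀ hn']
      nlinarith

lemma hat_mul_hat_eq_zero {n k l : ℕ} (h : k + 2 ≤ l) (t : ℝ) :
    hat n k t * hat n l t = 0 := by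
  have hkl : (k : ℝ) + 2 ≤ (l : ℝ) := by exact_mod_cast h
  rcases le_or_gt ((k : ℝ) + 1) (n * t) with h1 | h1
  · rw [hat_eq_zero_of_ge h1, zero_mul]
  · rw [hat_eq_zero_of_le (n := n) (k := l) (by linarith), mul_zero]

/-- telescoping sum -/
lemma sum_hat {n : ℕ} (t : ℝ) (ht : 0 ≤ t) (ht1 : (n : ℝ) * t ≤ n) :
    ∑ k ∈ Finset.range (n + 1), hat n k t = 1 := by
  have : ∑ k ∈ Finset.range (n + 1), hat n k t
      = R n (n + 1) t - R n 0 t := by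
    unfold hat
    exact Finset.sum_range_sub (fun k => R n k t) (n + 1)
  rw [this, R_eq_one (by push_cast; linarith),
    R_eq_zero (by simpa using mul_nonneg n.cast_nonneg ht)]
  ring



variable {A : Type*} [CStarAlgebra A] [PartialOrder A] [StarOrderedRing A]

/-- Key estimate: if `0 ≤ x ≤ b ≤ 1` and `c` is selfadjoint and commutes with `b`,
then `‖c*x‖² ≤ ‖c‖ * ‖c*b‖`. -/
lemma norm_mul_sq_le {x b c : A} (hx : 0 ≤ x) (hxb : x ≤ b) (hb1 : b ≤ 1)
    (hc : IsSelfAdjoint c) (hcb : c * b = b * c) :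
    ‖c * x‖ ^ 2 ≤ ‖c‖ * ‖c * b‖ := by
  have hxsa : IsSelfAdjoint x := .of_nonneg hx
  have hb : 0 ≤ b := hx.trans hxb
  have hsq : x ^ 2 ≤ x := by
    simpa using CStarAlgebra.pow_antitone hx (hxb.trans hb1) one_le_two
  have h1 : c * x * star (c * x) = c * x ^ 2 * c := by
    rw [star_mul, hc.star_eq, hxsa.star_eq]; noncomm_ring
  have h2 : c * x ^ 2 * c ≤ c * b * c := by
    have := hc.conjugate_le_conjugate (hsq.trans hxb)
    simpa using this
  have h3 : (0:A) ≤ c * x ^ 2 * c := by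
    have := star_left_conjugate_nonneg (CStarAlgebra.pow_nonneg hx 2) c
    simpa [hc.star_eq] using this
  calc ‖c * x‖ ^ 2 = ‖c * x * star (c * x)‖ := by
        rw [CStarRing.norm_self_mul_star]; ring
    _ = ‖c * x ^ 2 * c‖ := by rw [h1]
    _ ≤ ‖c * b * c‖ := CStarAlgebra.norm_le_norm_of_nonneg_of_le h3 h2
    _ = ‖c * (c * b)‖ := by rw [mul_assoc, ← hcb]
    _ ≤ ‖c‖ * ‖c * b‖ := norm_mul_le _ _

/-- if moreover `c * b = 0` then `c * x = 0`. -/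
lemma mul_eq_zero_of_orth {x b c : A} (hx : 0 ≤ x) (hxb : x ≤ b) (hb1 : b ≤ 1)
    (hc : IsSelfAdjoint c) (hcb : c * b = 0) : c * x = 0 := by
  have hcb' : c * b = b * c := by
    rw [hcb]
    have : star (c * b) = 0 := by rw [hcb, star_zero]
    rw [star_mul, hc.star_eq, (IsSelfAdjoint.of_nonneg (hx.trans hxb)).star_eq] at this
    exact this.symm
  have h := norm_mul_sq_le hx hxb hb1 hc hcb'
  rw [hcb, norm_zero, mul_zero] at h
  have : ‖c * x‖ = 0 := by nlinarith [norm_nonneg (c * x), sq_nonneg ‖c * x‖]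
  exact norm_eq_zero.mp this



variable {A : Type*} [CStarAlgebra A] [PartialOrder A] [StarOrderedRing A]

lemma sq_le_smul_self [Nontrivial A] {P : A} (hP : 0 ≤ P) {M : ℝ} (hM : ‖P‖ ≤ M) :
    P ^ 2 ≤ M • P := by
  have h1 : P ^ 2 = cfc (· ^ 2 : ℝ → ℝ) P := (cfc_pow_id P 2).symm
  have h2 : M • P = cfc (fun t : ℝ => M * t) P := (cfc_const_mul_id M P).symm
  rw [h1, h2]
  apply cfc_mono ?_ (by fun_prop) (by fun_prop)
  intro t ht
  have ht0 : 0 ≤ t := spectrum_nonneg_of_nonneg hP ht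
  have htM : t ≤ M := le_trans (le_trans (Real.le_norm_self t)
    (spectrum.norm_le_norm_of_mem ht)) hM
  nlinarith

lemma norm_sum_le_of_orthogonal [Nontrivial A] {ι : Type*} (s : Finset ι) (P : ι → A)
    (hpos : ∀ i ∈ s, 0 ≤ P i)
    (horth : ∀ i ∈ s, ∀ j ∈ s, i ≠ j → P i * P j = 0)
    {M : ℝ} (hM : 0 ≤ M) (hPM : ∀ i ∈ s, ‖P i‖ ≤ M) :
    ‖∑ i ∈ s, P i‖ ≤ M := by
  set Q := ∑ i ∈ s, P i with hQ
  have hQpos : 0 ≤ Q := Finset.sum_nonneg hpos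
  have hQsq : Q ^ 2 = ∑ i ∈ s, P i ^ 2 := by
    rw [sq, hQ, Finset.sum_mul_sum]
    refine Finset.sum_congr rfl (fun i hi => ?_)
    rw [Finset.sum_eq_single_of_mem i hi (fun j hj hji => horth i hi j hj hji.symm)]
    exact (sq (P i)).symm
  have hsum : Q ^ 2 ≤ M • Q := by
    rw [hQsq, hQ, Finset.smul_sum]
    exact Finset.sum_le_sum fun i hi => sq_le_smul_self (hpos i hi) (hPM i hi)
  have hQsq_pos : 0 ≤ Q ^ 2 := CStarAlgebra.pow_nonneg hQpos 2
  have hn : ‖Q ^ 2‖ ≤ ‖M • Q‖ := CStarAlgebra.norm_le_norm_of_nonneg_of_le hQsq_pos hsum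
  have hQsa : IsSelfAdjoint Q := .of_nonneg hQpos
  have hQQ : ‖Q ^ 2‖ = ‖Q‖ * ‖Q‖ := by
    rw [sq]
    nth_rewrite 1 [← hQsa.star_eq]
    exact CStarRing.norm_star_mul_self
  rw [hQQ, norm_smul, Real.norm_eq_abs, abs_of_nonneg hM] at hn
  rcases eq_or_lt_of_le (norm_nonneg Q) with h0 | h0
  · rw [← h0]; exact hM
  · exact le_of_mul_le_mul_right hn h0

section Key

variable {A : Type*} [CStarAlgebra A] [PartialOrder A] [StarOrderedRing A]

lemma cfc_commute {a : A} (f g : ℝ → ℝ) (hf : ContinuousOn f (spectrum ℝ a))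
    (hg : ContinuousOn g (spectrum ℝ a)) :
    cfc f a * cfc g a = cfc g a * cfc f a := by
  rw [← cfc_mul f g a hf hg, ← cfc_mul g f a hg hf]
  exact cfc_congr fun t _ => mul_comm _ _

variable [Nontrivial A]

lemma g_norm_le (g : A →ₗ[ℂ] A)
    (hgpos : ∀ y : A, 0 ≤ y → 0 ≤ g y) (hgle : ∀ y : A, 0 ≤ y → g y ≤ y)
    {z : A} (hz : IsSelfAdjoint z) {δ : ℝ} (hδ : 0 ≤ δ) (hzn : ‖z‖ ≤ δ) :
    ‖g z‖ ≤ 3 * δ := by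
  have hgmono : ∀ y w : A, y ≤ w → g y ≤ g w := by
    intro y w h
    have h0 := hgpos _ (sub_nonneg.mpr h)
    rw [map_sub] at h0
    exact sub_nonneg.mp h0
  have hp0 : (0:A) ≤ g 1 := hgpos 1 zero_le_one
  have hp1 : g 1 ≤ 1 := hgle 1 zero_le_one
  have hpn : ‖g 1‖ ≤ 1 := (CStarAlgebra.norm_le_one_iff_of_nonneg _ hp0).mpr hp1
  have hsm : ‖z‖ • (1:A) ≤ δ • 1 := by
    have h := smul_nonneg (sub_nonneg.mpr hzn) (zero_le_one (α := A))
    rw [sub_smul] at h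
    exact sub_nonneg.mp h
  have h1 : -(δ • (1:A)) ≤ z := by
    refine le_trans ?_ hz.neg_algebraMap_norm_le_self
    rw [Algebra.algebraMap_eq_smul_one]
    exact neg_le_neg hsm
  have h2 : z ≤ δ • 1 := by
    refine le_trans hz.le_algebraMap_norm_self ?_
    rw [Algebra.algebraMap_eq_smul_one]
    exact hsm
  have h3 : (0:A) ≤ z + δ • 1 := by
    have := add_le_add_left h1 (δ • (1:A))
    simpa using this
  have h4 : z + δ • 1 ≤ (2*δ) • 1 := by
    have := add_le_add_left h2 (δ • (1:A))
    rw [show (2*δ) • (1:A) = δ • 1 + δ • 1 by rw [two_mul, add_smul]]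
    exact this
  have h5 : g (z + δ • 1) ≤ (2*δ) • g 1 := by
    refine le_trans (hgmono _ _ h4) ?_
    rw [g.map_smul_of_tower]
  have h7 : ‖g (z + δ • 1)‖ ≤ 2*δ := by
    refine le_trans (CStarAlgebra.norm_le_norm_of_nonneg_of_le (hgpos _ h3) h5) ?_
    rw [norm_smul, Real.norm_eq_abs, abs_of_nonneg (by linarith)]
    nlinarith [norm_nonneg (g 1)]
  have h8 : g z = g (z + δ • 1) - δ • g 1 := by
    rw [map_add, g.map_smul_of_tower]
    abel
  rw [h8]
  refine le_trans (norm_sub_le _ _) ?_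
  have : ‖δ • g 1‖ ≤ δ := by
    rw [norm_smul, Real.norm_eq_abs, abs_of_nonneg hδ]
    nlinarith [norm_nonneg (g 1)]
  linarith

lemma key_est (g : A →ₗ[ℂ] A)
    (hgpos : ∀ y : A, 0 ≤ y → 0 ≤ g y)
    (hgle : ∀ y : A, 0 ≤ y → g y ≤ y)
    {a : A} (ha : 0 ≤ a) (ha1 : a ≤ 1) {n : ℕ} (hn : 1 ≤ n) :
    ‖g a - a * g 1‖ ≤ 3 * (1 / n) + 3 * Real.sqrt (1 / n) := by
  have hgmono : ∀ y w : A, y ≤ w → g y ≤ g w := by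
    intro y w h
    have h0 := hgpos _ (sub_nonneg.mpr h)
    rw [map_sub] at h0
    exact sub_nonneg.mp h0
  have hn' : (0:ℝ) < n := by exact_mod_cast hn
  have hsa : IsSelfAdjoint a := .of_nonneg ha
  have hspec : ∀ t ∈ spectrum ℝ a, 0 ≤ t ∧ t ≤ 1 := by
    intro t ht
    refine ⟨spectrum_nonneg_of_nonneg ha ht, ?_⟩
    have h1 : ‖a‖ ≤ 1 := (CStarAlgebra.norm_le_one_iff_of_nonneg a ha).mpr ha1
    exact le_trans (le_trans (Real.le_norm_self t) (spectrum.norm_le_norm_of_mem ht)) h1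
  set b : ℕ → A := fun k => cfc (hat n k) a with hb
  set x : ℕ → A := fun k => g (b k) with hx
  set c : ℕ → A := fun k => cfc (fun t : ℝ => t - (k:ℝ)/n) a with hc
  have hbpos : ∀ k, 0 ≤ b k := fun k => cfc_nonneg fun t _ => hat_nonneg n k t
  have hb1 : ∀ k, b k ≤ 1 := fun k => cfc_le_one _ _ fun t _ => hat_le_one n k t
  have hbsa : ∀ k, IsSelfAdjoint (b k) := fun k => cfc_predicate _ a
  have hcsa : ∀ k, IsSelfAdjoint (c k) := fun k => cfc_predicate _ a
  have hccont : ∀ k : ℕ, ContinuousOn (fun t : ℝ => t - (k:ℝ)/n) (spectrum ℝ a) := by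
    intro k; fun_prop
  have hsum_b : ∑ k ∈ Finset.range (n+1), b k = 1 := by
    simp only [hb]
    rw [← cfc_sum (fun k => hat n k) a _ (fun i _ => (hat_continuous n i).continuousOn)]
    rw [cfc_congr (g := fun _ : ℝ => (1:ℝ)) ?_]
    · rw [cfc_const 1 a, map_one]
    · intro t ht
      obtain ⟨ht0, ht1⟩ := hspec t ht
      have hnt : (n:ℝ) * t ≤ (n:ℝ) := by nlinarith
      have := sum_hat t ht0 hnt
      simpa [Finset.sum_apply] using this
  have hxpos : ∀ k, 0 ≤ x k := fun k => hgpos _ (hbpos k)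
  have hxsa : ∀ k, IsSelfAdjoint (x k) := fun k => .of_nonneg (hxpos k)
  have hxb : ∀ k, x k ≤ b k := fun k => hgle _ (hbpos k)
  have hsum_x : ∑ k ∈ Finset.range (n+1), x k = g 1 := by
    simp only [hx]
    rw [← map_sum, hsum_b]
  have hbb : ∀ k l, (k+2 ≤ l ∨ l+2 ≤ k) → b k * b l = 0 := by
    have base : ∀ k l, k+2 ≤ l → b k * b l = 0 := by
      intro k l h
      simp only [hb]
      rw [← cfc_mul _ _ a (hat_continuous n k).continuousOn (hat_continuous n l).continuousOn]
      rw [cfc_congr (g := fun _ : ℝ => (0:ℝ)) (fun t _ => hat_mul_hat_eq_zero h t)]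
      rw [cfc_const 0 a, map_zero]
    intro k l h
    rcases h with h | h
    · exact base k l h
    · simp only [hb]
      rw [cfc_commute _ _ (hat_continuous n k).continuousOn (hat_continuous n l).continuousOn]
      have := base l k h
      simp only [hb] at this
      exact this
  have hbx : ∀ k l, (k+2 ≤ l ∨ l+2 ≤ k) → b k * x l = 0 := by
    intro k l h
    exact mul_eq_zero_of_orth (hxpos l) (hxb l) (hb1 l) (hbsa k) (hbb k l h)
  have hxb0 : ∀ k l, (k+2 ≤ l ∨ l+2 ≤ k) → x l * b k = 0 := by
    intro k l h
    have h0 := hbx k l h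
    calc x l * b k = star (b k * x l) := by
          rw [star_mul, (hbsa k).star_eq, (hxsa l).star_eq]
      _ = 0 := by rw [h0, star_zero]
  have hmid : ∀ k l, (k+3 ≤ l ∨ l+3 ≤ k) → ∀ z : A, (∀ m, z * b m = b m * z) →
      x k * z * x l = 0 := by
    intro k l hkl z hz
    have h1 : x k * z * x l = ∑ m ∈ Finset.range (n+1), x k * z * (b m * x l) := by
      calc x k * z * x l = x k * z * ((∑ m ∈ Finset.range (n+1), b m) * x l) := by
            rw [hsum_b, one_mul]
        _ = ∑ m ∈ Finset.range (n+1), x k * z * (b m * x l) := by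
            rw [Finset.sum_mul, Finset.mul_sum]
    rw [h1]
    apply Finset.sum_eq_zero
    intro m _
    rcases (by omega : (m+2 ≤ k ∨ k+2 ≤ m) ∨ (m+2 ≤ l ∨ l+2 ≤ m)) with hcase | hcase
    · have hzero : x k * b m = 0 := hxb0 m k hcase
      calc x k * z * (b m * x l) = x k * (z * b m) * x l := by noncomm_ring
        _ = x k * (b m * z) * x l := by rw [hz m]
        _ = ((x k * b m) * z) * x l := by noncomm_ring
        _ = 0 := by rw [hzero, zero_mul, zero_mul]
    · rw [hbx m l hcase, mul_zero]
  have hone_comm : ∀ m, (1:A) * b m = b m * 1 := by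
    intro m; rw [one_mul, mul_one]
  have hxx : ∀ k l, (k+3 ≤ l ∨ l+3 ≤ k) → x k * x l = 0 := by
    intro k l h
    have := hmid k l h 1 hone_comm
    simpa using this
  have hc_eq : ∀ k, c k = a - ((k:ℝ)/n) • 1 := by
    intro k
    simp only [hc]
    calc cfc (fun t : ℝ => t - (k:ℝ)/n) a
        = cfc (fun t : ℝ => t) a - cfc (fun _ : ℝ => (k:ℝ)/n) a :=
          cfc_sub _ _ a (by fun_prop) (by fun_prop)
      _ = a - ((k:ℝ)/n) • 1 := by
          rw [cfc_id' ℝ a, cfc_const _ a, Algebra.algebraMap_eq_smul_one]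
  have hcb_norm : ∀ k ∈ Finset.range (n+1), ‖c k * b k‖ ≤ 1/n := by
    intro k _
    simp only [hc, hb]
    rw [← cfc_mul _ _ a (hccont k) (hat_continuous n k).continuousOn]
    apply norm_cfc_le (by positivity)
    intro t _
    rw [Real.norm_eq_abs, abs_mul, abs_of_nonneg (hat_nonneg n k t)]
    calc |t - (k:ℝ)/n| * hat n k t ≤ (1/n) * hat n k t := abs_hat_mul_le hn t
      _ ≤ (1/n) * 1 := mul_le_mul_of_nonneg_left (hat_le_one n k t) (by positivity)
      _ = 1/n := mul_one _
  have hc_norm : ∀ k ∈ Finset.range (n+1), ‖c k‖ ≤ 1 := by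
    intro k hk
    simp only [hc]
    apply norm_cfc_le zero_le_one
    intro t ht
    have h0k : (0:ℝ) ≤ (k:ℝ)/n := by positivity
    have hk1 : (k:ℝ)/n ≤ 1 := by
      rw [div_le_one hn']
      exact_mod_cast Nat.lt_succ_iff.mp (Finset.mem_range.mp hk)
    obtain ⟨ht0, ht1⟩ := hspec t ht
    rw [Real.norm_eq_abs, abs_le]
    constructor <;> linarith
  have hcbcomm : ∀ k m, c k * b m = b m * c k := fun k m =>
    cfc_commute _ _ (hccont k) (hat_continuous n m).continuousOn
  set T : ℕ → A := fun k => c k * x k with hT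
  have hstarT : ∀ k, star (T k) = x k * c k := by
    intro k
    simp only [hT]
    rw [star_mul, (hcsa k).star_eq, (hxsa k).star_eq]
  have hT_norm : ∀ k ∈ Finset.range (n+1), ‖T k‖^2 ≤ 1/n := by
    intro k hk
    refine le_trans (norm_mul_sq_le (hxpos k) (hxb k) (hb1 k) (hcsa k) (hcbcomm k k)) ?_
    calc ‖c k‖ * ‖c k * b k‖ ≤ 1 * (1/n) :=
          mul_le_mul (hc_norm k hk) (hcb_norm k hk) (norm_nonneg _) zero_le_one
      _ = 1/n := one_mul _
  have hTT : ∀ k l, (k+3 ≤ l ∨ l+3 ≤ k) → T k * star (T l) = 0 := by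
    intro k l h
    rw [hstarT]
    simp only [hT]
    calc c k * x k * (x l * c l) = c k * (x k * 1 * x l) * c l := by noncomm_ring
      _ = 0 := by rw [hmid k l h 1 hone_comm, mul_zero, zero_mul]
  have hccommb : ∀ k l m, (c k * c l) * b m = b m * (c k * c l) := by
    intro k l m
    rw [mul_assoc, hcbcomm l m, ← mul_assoc, hcbcomm k m, mul_assoc]
  have hPP : ∀ k l, (k+3 ≤ l ∨ l+3 ≤ k) →
      (T k * star (T k)) * (T l * star (T l)) = 0 := by
    intro k l h
    rw [hstarT, hstarT]
    simp only [hT]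
    have hmid2 : x k * (c k * c l) * x l = 0 := hmid k l h _ (hccommb k l)
    calc c k * x k * (x k * c k) * (c l * x l * (x l * c l))
        = c k * x k * (x k * (c k * c l) * x l) * (x l * c l) := by noncomm_ring
      _ = 0 := by rw [hmid2, mul_zero, zero_mul]
  -- residue classes mod 3
  set Sr : ℕ → A := fun r => ∑ k ∈ (Finset.range (n+1)).filter (fun k => k % 3 = r), T k
    with hSr
  have hSr_norm : ∀ r, ‖Sr r‖ ≤ Real.sqrt (1/n) := by
    intro r
    have horth3 : ∀ k ∈ (Finset.range (n+1)).filter (fun k => k % 3 = r),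
        ∀ l ∈ (Finset.range (n+1)).filter (fun k => k % 3 = r), k ≠ l →
        (k+3 ≤ l ∨ l+3 ≤ k) := by
      intro k hk l hl hkl
      rw [Finset.mem_filter] at hk hl
      omega
    have h2 : Sr r * star (Sr r)
        = ∑ k ∈ (Finset.range (n+1)).filter (fun k => k % 3 = r), T k * star (T k) := by
      simp only [hSr]
      rw [star_sum, Finset.sum_mul_sum]
      refine Finset.sum_congr rfl (fun k hk => ?_)
      rw [Finset.sum_eq_single_of_mem k hk
        (fun l hl hlk => hTT k l (horth3 k hk l hl hlk.symm))]
    have h3 : ‖Sr r * star (Sr r)‖ ≤ 1/n := by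
      rw [h2]
      refine norm_sum_le_of_orthogonal _ _ (fun k _ => mul_star_self_nonneg _)
        (fun k hk l hl hkl => hPP k l (horth3 k hk l hl hkl)) (by positivity)
        (fun k hk => ?_)
      rw [CStarRing.norm_self_mul_star, ← sq]
      exact hT_norm k (Finset.mem_filter.mp hk).1
    have h4 : ‖Sr r‖^2 ≤ 1/n := by
      rw [sq, ← CStarRing.norm_self_mul_star]
      exact h3
    calc ‖Sr r‖ = Real.sqrt (‖Sr r‖^2) := (Real.sqrt_sq (norm_nonneg _)).symm
      _ ≤ Real.sqrt (1/n) := Real.sqrt_le_sqrt h4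
  set S := ∑ k ∈ Finset.range (n+1), T k with hS
  have hS_norm : ‖S‖ ≤ 3 * Real.sqrt (1/n) := by
    have hsplit : S = Sr 0 + Sr 1 + Sr 2 := by
      rw [hS, ← Finset.sum_fiberwise_of_maps_to
        (g := fun k => k % 3) (t := Finset.range 3)
        (fun k _ => Finset.mem_range.mpr (Nat.mod_lt _ (by norm_num))) T]
      rw [show Finset.range 3 = {0, 1, 2} by rfl]
      rw [Finset.sum_insert (by norm_num), Finset.sum_insert (by norm_num),
        Finset.sum_singleton]
      simp only [hSr]
      rw [add_assoc]
    rw [hsplit]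
    have h0 := hSr_norm 0
    have h1 := hSr_norm 1
    have h2 := hSr_norm 2
    calc ‖Sr 0 + Sr 1 + Sr 2‖ ≤ ‖Sr 0 + Sr 1‖ + ‖Sr 2‖ := norm_add_le _ _
      _ ≤ ‖Sr 0‖ + ‖Sr 1‖ + ‖Sr 2‖ := by linarith [norm_add_le (Sr 0) (Sr 1)]
      _ ≤ 3 * Real.sqrt (1/n) := by linarith
  set D := ∑ k ∈ Finset.range (n+1), ((k:ℝ)/n) • x k with hD
  have hS_eq : S = a * g 1 - D := by
    rw [hS, hD, ← hsum_x, Finset.mul_sum, ← Finset.sum_sub_distrib]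
    refine Finset.sum_congr rfl (fun k _ => ?_)
    simp only [hT]
    rw [hc_eq k, sub_mul, smul_mul_assoc, one_mul]
  set ψ := ∑ k ∈ Finset.range (n+1), ((k:ℝ)/n) • b k with hψ
  have hgψ : g ψ = D := by
    rw [hψ, hD, map_sum]
    exact Finset.sum_congr rfl (fun k _ => g.map_smul_of_tower _ _)
  have hFcont : ∀ k ∈ Finset.range (n+1),
      ContinuousOn (fun t : ℝ => ((k:ℝ)/n) * hat n k t) (spectrum ℝ a) :=
    fun k _ => ((continuous_const.mul (hat_continuous n k)).continuousOn)
  have hψ_cfc : cfc (fun t : ℝ => ∑ k ∈ Finset.range (n+1), ((k:ℝ)/n) * hat n k t) a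
      = ψ := by
    have hfun : (fun t : ℝ => ∑ k ∈ Finset.range (n+1), ((k:ℝ)/n) * hat n k t)
        = ∑ k ∈ Finset.range (n+1), (fun t : ℝ => ((k:ℝ)/n) * hat n k t) := by
      funext t
      simp [Finset.sum_apply]
    rw [hfun, cfc_sum _ a _ hFcont]
    simp only [hψ, hb]
    refine Finset.sum_congr rfl (fun k _ => ?_)
    have := cfc_smul (((k:ℝ))/n) (hat n k) a ((hat_continuous n k).continuousOn)
    simp only [smul_eq_mul] at this
    rw [this]
  have hψ_eq : a - ψ
      = cfc (fun t : ℝ => t - ∑ k ∈ Finset.range (n+1), ((k:ℝ)/n) * hat n k t) a := by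
    rw [cfc_sub (fun t : ℝ => t) (fun t : ℝ => ∑ k ∈ Finset.range (n+1), ((k:ℝ)/n) * hat n k t) a (by fun_prop)
      (continuous_finset_sum _ (fun k _ => continuous_const.mul (hat_continuous n k))).continuousOn]
    rw [cfc_id' ℝ a, hψ_cfc]
  have hψsa : IsSelfAdjoint (a - ψ) := by
    rw [hψ_eq]; exact cfc_predicate _ a
  have hψ_norm : ‖a - ψ‖ ≤ 1/n := by
    rw [hψ_eq]
    apply norm_cfc_le (by positivity)
    intro t ht
    obtain ⟨ht0, ht1⟩ := hspec t ht
    have hnt : (n:ℝ) * t ≤ (n:ℝ) := by nlinarith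
    have hsum := sum_hat (n := n) t ht0 hnt
    have hexpand : t - ∑ k ∈ Finset.range (n+1), ((k:ℝ)/n) * hat n k t
        = ∑ k ∈ Finset.range (n+1), (t - (k:ℝ)/n) * hat n k t := by
      have hterm : ∀ k : ℕ, (t - (k:ℝ)/n) * hat n k t
          = t * hat n k t - ((k:ℝ)/n) * hat n k t := fun k => by ring
      rw [Finset.sum_congr rfl (fun k _ => hterm k), Finset.sum_sub_distrib,
        ← Finset.mul_sum, hsum, mul_one]
    rw [Real.norm_eq_abs, hexpand]
    calc |∑ k ∈ Finset.range (n+1), (t - (k:ℝ)/n) * hat n k t|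
        ≤ ∑ k ∈ Finset.range (n+1), |(t - (k:ℝ)/n) * hat n k t| :=
          Finset.abs_sum_le_sum_abs _ _
      _ ≤ ∑ k ∈ Finset.range (n+1), (1/n) * hat n k t := by
          refine Finset.sum_le_sum (fun k _ => ?_)
          rw [abs_mul, abs_of_nonneg (hat_nonneg n k t)]
          exact abs_hat_mul_le hn t
      _ = 1/n := by rw [← Finset.mul_sum, hsum, mul_one]
  have hsmall : ‖g (a - ψ)‖ ≤ 3 * (1/n) :=
    g_norm_le g hgpos hgle hψsa (by positivity) hψ_norm
  have hfinal : g a - a * g 1 = g (a - ψ) - S := by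
    rw [map_sub, hgψ, hS_eq]
    abel
  rw [hfinal]
  calc ‖g (a - ψ) - S‖ ≤ ‖g (a - ψ)‖ + ‖S‖ := norm_sub_le _ _
    _ ≤ 3 * (1/n) + 3 * Real.sqrt (1/n) := add_le_add hsmall hS_norm

end Key

section Final

variable {A : Type*} [CStarAlgebra A] [PartialOrder A] [StarOrderedRing A]

lemma selfadjoint_decomp (z : A) :
    ∃ x y : A, IsSelfAdjoint x ∧ IsSelfAdjoint y ∧ z = x + Complex.I • y := by
  refine ⟨(2⁻¹ : ℂ) • (z + star z), (-(Complex.I/2)) • (z - star z), ?_, ?_, ?_⟩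
  · rw [IsSelfAdjoint, star_smul, star_add, star_star, Complex.star_def]
    have : (starRingEnd ℂ) (2⁻¹ : ℂ) = (2⁻¹ : ℂ) := by simp [Complex.conj_ofNat]
    rw [this]
    module
  · rw [IsSelfAdjoint, star_smul, star_sub, star_star, Complex.star_def]
    have : (starRingEnd ℂ) (-(Complex.I/2)) = Complex.I/2 := by
      simp [map_div₀, Complex.conj_ofNat]
      ring
    rw [this]
    module
  · rw [smul_smul]
    have : Complex.I * -(Complex.I/2) = (2⁻¹ : ℂ) := by
      ring_nf
      simp [Complex.I_sq]
      norm_num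
    rw [this]
    module

variable [Nontrivial A]

lemma key (g : A →ₗ[ℂ] A)
    (hgpos : ∀ y : A, 0 ≤ y → 0 ≤ g y)
    (hgle : ∀ y : A, 0 ≤ y → g y ≤ y)
    {a : A} (ha : 0 ≤ a) (ha1 : a ≤ 1) :
    g a = a * g 1 := by
  have hle : ∀ n : ℕ, 1 ≤ n → ‖g a - a * g 1‖ ≤ 3 * (1/(n:ℝ)) + 3 * Real.sqrt (1/n) :=
    fun n hn => key_est g hgpos hgle ha ha1 hn
  have h1 : Filter.Tendsto (fun n : ℕ => 1/(n:ℝ)) Filter.atTop (nhds 0) :=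
    tendsto_one_div_atTop_nhds_zero_nat
  have h2 : Filter.Tendsto (fun n : ℕ => Real.sqrt (1/(n:ℝ))) Filter.atTop (nhds 0) := by
    have h := (Real.continuous_sqrt.tendsto 0).comp h1
    simpa only [Function.comp_def, Real.sqrt_zero] using h
  have htend : Filter.Tendsto (fun n : ℕ => 3 * (1/(n:ℝ)) + 3 * Real.sqrt (1/n))
      Filter.atTop (nhds 0) := by
    have := (h1.const_mul 3).add (h2.const_mul 3)
    simpa using this
  have hnorm : ‖g a - a * g 1‖ ≤ 0 := by
    refine ge_of_tendsto htend ?_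
    filter_upwards [Filter.eventually_ge_atTop 1] with n hn
    exact hle n hn
  have hz : ‖g a - a * g 1‖ = 0 := le_antisymm hnorm (norm_nonneg _)
  exact sub_eq_zero.mp (norm_eq_zero.mp hz)

theorem main_nontrivial (f : A × A →ₗ[ℂ] A)
    (hpos : ∀ a b : A, 0 ≤ a → 0 ≤ b → 0 ≤ f (a, b))
    (hunital : f (1, 1) = 1)
    (hdiag : ∀ a : A, f (a, a) = a) :
    (∀ a : A, f (1, 0) * a = a * f (1, 0)) ∧
      (∀ a b : A, f (a, b) = a * f (1, 0) + b * (1 - f (1, 0))) := by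
  set g : A →ₗ[ℂ] A := f ∘ₗ LinearMap.inl ℂ A A with hgdef
  have hgapp : ∀ y : A, g y = f (y, 0) := fun y => rfl
  have hgpos : ∀ y : A, 0 ≤ y → 0 ≤ g y := by
    intro y hy
    rw [hgapp]
    exact hpos y 0 hy le_rfl
  have hgle : ∀ y : A, 0 ≤ y → g y ≤ y := by
    intro y hy
    have h1 : f (y, y) - f (y, 0) = f (0, y) := by
      rw [← map_sub]
      norm_num
    have h2 : (0:A) ≤ f (0, y) := hpos 0 y le_rfl hy
    rw [hgapp, ← sub_nonneg]
    rw [show y - f (y, 0) = f (y, y) - f (y, 0) by rw [hdiag], h1]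
    exact h2
  have hkey : ∀ a : A, 0 ≤ a → a ≤ 1 → g a = a * g 1 :=
    fun a ha ha1 => key g hgpos hgle ha ha1
  have hpos' : ∀ a : A, 0 ≤ a → g a = a * g 1 := by
    intro a ha
    have hr0 : (0:ℝ) < ‖a‖ + 1 := by positivity
    set r : ℝ := ‖a‖ + 1 with hr
    have ha' : 0 ≤ r⁻¹ • a := smul_nonneg (by positivity) ha
    have hn1 : ‖r⁻¹ • a‖ ≤ 1 := by
      rw [norm_smul, Real.norm_eq_abs, abs_of_nonneg (by positivity)]
      rw [← div_eq_inv_mul, div_le_one hr0]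
      linarith [norm_nonneg a]
    have ha1 : r⁻¹ • a ≤ 1 := (CStarAlgebra.norm_le_one_iff_of_nonneg _ ha').mp hn1
    have hk := hkey _ ha' ha1
    have h2 : g a = r • ((r⁻¹ • a) * g 1) := by
      rw [← hk, ← g.map_smul_of_tower, smul_inv_smul₀ hr0.ne']
    rw [h2, smul_mul_assoc, smul_inv_smul₀ hr0.ne']
  have hsa : ∀ a : A, IsSelfAdjoint a → g a = a * g 1 := by
    intro a ha
    have hu : (0:A) ≤ algebraMap ℝ A ‖a‖ + a := by
      have h := add_le_add_left ha.neg_algebraMap_norm_le_self (algebraMap ℝ A ‖a‖)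
      calc (0:A) = -(algebraMap ℝ A ‖a‖) + algebraMap ℝ A ‖a‖ := by simp
        _ ≤ a + algebraMap ℝ A ‖a‖ := h
        _ = algebraMap ℝ A ‖a‖ + a := add_comm _ _
    have heq : a = (algebraMap ℝ A ‖a‖ + a) - ‖a‖ • 1 := by
      rw [Algebra.algebraMap_eq_smul_one]
      abel
    have h1 : g (algebraMap ℝ A ‖a‖ + a) = (algebraMap ℝ A ‖a‖ + a) * g 1 := hpos' _ hu
    have h2 : g (‖a‖ • (1:A)) = (‖a‖ • (1:A)) * g 1 := by
      rw [g.map_smul_of_tower, smul_mul_assoc, one_mul]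
    calc g a = g ((algebraMap ℝ A ‖a‖ + a) - ‖a‖ • 1) := by rw [← heq]
      _ = g (algebraMap ℝ A ‖a‖ + a) - g (‖a‖ • (1:A)) := map_sub _ _ _
      _ = (algebraMap ℝ A ‖a‖ + a) * g 1 - (‖a‖ • (1:A)) * g 1 := by rw [h1, h2]
      _ = ((algebraMap ℝ A ‖a‖ + a) - ‖a‖ • 1) * g 1 := (sub_mul _ _ _).symm
      _ = a * g 1 := by rw [← heq]
  have hall : ∀ z : A, g z = z * g 1 := by
    intro z
    obtain ⟨xz, yz, hx, hy, hzeq⟩ := selfadjoint_decomp z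
    rw [hzeq, map_add, map_smul, hsa _ hx, hsa _ hy, add_mul, smul_mul_assoc]
  have hp0 : (0:A) ≤ g 1 := hgpos 1 zero_le_one
  have hpsa : IsSelfAdjoint (g 1) := .of_nonneg hp0
  have hposc : ∀ a : A, 0 ≤ a → g 1 * a = a * g 1 := by
    intro a ha
    have h1 : IsSelfAdjoint (g a) := .of_nonneg (hgpos a ha)
    rw [hall a] at h1
    have h2 := h1.star_eq
    rw [star_mul, hpsa.star_eq, (IsSelfAdjoint.of_nonneg ha).star_eq] at h2
    exact h2
  have hsac : ∀ a : A, IsSelfAdjoint a → g 1 * a = a * g 1 := by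
    intro a ha
    have hu : (0:A) ≤ algebraMap ℝ A ‖a‖ + a := by
      have h := add_le_add_left ha.neg_algebraMap_norm_le_self (algebraMap ℝ A ‖a‖)
      calc (0:A) = -(algebraMap ℝ A ‖a‖) + algebraMap ℝ A ‖a‖ := by simp
        _ ≤ a + algebraMap ℝ A ‖a‖ := h
        _ = algebraMap ℝ A ‖a‖ + a := add_comm _ _
    have h1 := hposc _ hu
    have h2 : g 1 * algebraMap ℝ A ‖a‖ = algebraMap ℝ A ‖a‖ * g 1 := by
      rw [Algebra.algebraMap_eq_smul_one, mul_smul_comm, smul_mul_assoc, mul_one, one_mul]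
    rw [mul_add, add_mul] at h1
    rw [h2] at h1
    exact add_left_cancel h1
  have hcentral : ∀ z : A, g 1 * z = z * g 1 := by
    intro z
    obtain ⟨xz, yz, hx, hy, hzeq⟩ := selfadjoint_decomp z
    rw [hzeq, mul_add, add_mul, hsac _ hx, mul_smul_comm, smul_mul_assoc, hsac _ hy]
  have hp : f (1, 0) = g 1 := (hgapp 1).symm
  refine ⟨fun a => by rw [hp]; exact hcentral a, fun a b => ?_⟩
  have hsplit : f (a, b) = f (a, 0) + f (0, b) := by
    rw [← map_add]
    norm_num
  have hofb : f (0, b) = b - b * g 1 := by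
    have h1 : f (b, b) - f (b, 0) = f (0, b) := by
      rw [← map_sub]
      norm_num
    rw [← h1, hdiag b, ← hgapp b, hall b]
  rw [hsplit, ← hgapp a, hall a, hofb, hp, mul_one_sub]

end Final

end
end Stmt1Aux

/-- Let `A` be a unital C*-algebra (with its canonical order) and let
`f : A × A → A` be a ℂ-linear map that is positive, unital, and satisfies
`f (a, a) = a` for all `a`. Then `p := f (1, 0)` is central in `A`, and
`f (a, b) = a * p + b * (1 - p)` for all `a b : A`. -/
theorem stmt1 {A : Type*} [CStarAlgebra A] [PartialOrder A] [StarOrderedRing A]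
    (f : A × A →ₗ[ℂ] A)
    (hpos : ∀ a b : A, 0 ≤ a → 0 ≤ b → 0 ≤ f (a, b))
    (hunital : f (1, 1) = 1)
    (hdiag : ∀ a : A, f (a, a) = a) :
    (∀ a : A, f (1, 0) * a = a * f (1, 0)) ∧
      (∀ a b : A, f (a, b) = a * f (1, 0) + b * (1 - f (1, 0))) := by
  rcases subsingleton_or_nontrivial A with hA | hA
  · exact ⟨fun a => Subsingleton.elim _ _, fun a b => Subsingleton.elim _ _⟩
  · exact Stmt1Aux.main_nontrivial f hpos hunital hdiag
end

section
/- Let X be a set and let φ : ℓ^∞(X) → ℂ be a unital ℂ-algebra homomorphism on the algebra ℓ^∞(X) of bounded complex-valued functions on X (with pointwise operations), which is completely additive in the following sense: for every index type ι and every family (S_i)_{i ∈ ι} of pairwise disjoint subsets of X, the family (φ(1_{S_i}))_{i ∈ ι} has sum φ(1_{⋃_i S_i}), where 1_S ∈ ℓ^∞(X) denotes the indicator function of S ⊆ X. Then there exists x₀ ∈ X such that φ(f) = f(x₀) for every f ∈ ℓ^∞(X). -/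
/-!
Applying complete additivity to the partition of `X` into singletons gives
`∑ₓ φ(1_{x}) = φ(1) = 1`, so some `φ(1_{x₀})` is nonzero. Since `1_{x₀}` is idempotent,
`φ(1_{x₀}) = 1`, and then `f · 1_{x₀} = f(x₀) · 1_{x₀}` yields `φ f = f x₀`.
-/

open scoped ENNReal

/-- The indicator function of a set `S ⊆ X`, as an element of `ℓ^∞(X)`. -/
noncomputable def indicatorLinfty {X : Type} (S : Set X) : lp (fun _ : X => ℂ) ∞ :=
  ⟨S.indicator (fun _ => (1 : ℂ)), memℓp_infty (by
    refine ⟨1, ?_⟩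
    rintro r ⟨x, rfl⟩
    by_cases hx : x ∈ S <;> simp [hx])⟩

section indicatorLinfty

variable {X : Type}

@[simp]
lemma indicatorLinfty_apply (S : Set X) (x : X) :
    indicatorLinfty S x = S.indicator (fun _ => (1 : ℂ)) x := rfl

lemma indicatorLinfty_univ : indicatorLinfty (Set.univ : Set X) = 1 := by
  ext x
  simp [lp.infty_coeFn_one]

lemma isIdempotentElem_indicatorLinfty (S : Set X) :
    IsIdempotentElem (indicatorLinfty S) := by
  ext x
  by_cases hx : x ∈ S <;> simp [lp.infty_coeFn_mul, hx]

lemma mul_indicatorLinfty_singleton (f : lp (fun _ : X => ℂ) ∞) (x₀ : X) :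
    f * indicatorLinfty {x₀} = f x₀ • indicatorLinfty {x₀} := by
  ext x
  by_cases hx : x = x₀ <;> simp [lp.infty_coeFn_mul, hx]

lemma hasSum_indicatorLinfty_singleton_of_completelyAdditive
    (φ : lp (fun _ : X => ℂ) ∞ →ₐ[ℂ] ℂ)
    (hadd : ∀ (ι : Type) (S : ι → Set X), Pairwise (Function.onFun Disjoint S) →
      HasSum (fun i => φ (indicatorLinfty (S i))) (φ (indicatorLinfty (⋃ i, S i)))) :
    HasSum (fun x : X => φ (indicatorLinfty {x})) 1 := by
  have hdisj : Pairwise (Function.onFun Disjoint fun x : X => ({x} : Set X)) :=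
    fun _ _ hab => Set.disjoint_singleton.mpr hab
  simpa [Set.iUnion_of_singleton, indicatorLinfty_univ] using hadd X (fun x => {x}) hdisj

lemma exists_map_indicatorLinfty_singleton_ne_zero {φ : lp (fun _ : X => ℂ) ∞ →ₐ[ℂ] ℂ}
    (hφ : HasSum (fun x : X => φ (indicatorLinfty {x})) 1) :
    ∃ x₀ : X, φ (indicatorLinfty {x₀}) ≠ 0 := by
  by_contra! h
  exact one_ne_zero (hφ.unique (by simp [h, hasSum_zero]))

lemma map_indicatorLinfty_eq_one {φ : lp (fun _ : X => ℂ) ∞ →ₐ[ℂ] ℂ} {S : Set X}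
    (hS : φ (indicatorLinfty S) ≠ 0) : φ (indicatorLinfty S) = 1 :=
  (IsIdempotentElem.iff_eq_zero_or_one.mp
    ((isIdempotentElem_indicatorLinfty S).map φ)).resolve_left hS

lemma apply_eq_of_map_indicatorLinfty_singleton {φ : lp (fun _ : X => ℂ) ∞ →ₐ[ℂ] ℂ} {x₀ : X}
    (hx₀ : φ (indicatorLinfty {x₀}) = 1) (f : lp (fun _ : X => ℂ) ∞) : φ f = f x₀ := by
  simpa [hx₀] using congrArg φ (mul_indicatorLinfty_singleton f x₀)

end indicatorLinfty

/-- **Normal characters of `ℓ^∞(X)` are point evaluations.**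
Let `φ : ℓ^∞(X) → ℂ` be a unital `ℂ`-algebra homomorphism that is completely
additive: for every family of pairwise disjoint subsets `(Sᵢ)` of `X`, the
family `(φ(1_{Sᵢ}))` has sum `φ(1_{⋃ᵢ Sᵢ})`. Then `φ` is evaluation at some
point `x₀ ∈ X`. -/
theorem stmt13 {X : Type} (φ : lp (fun _ : X => ℂ) ∞ →ₐ[ℂ] ℂ)
    (hadd : ∀ (ι : Type) (S : ι → Set X), Pairwise (Function.onFun Disjoint S) →
      HasSum (fun i => φ (indicatorLinfty (S i))) (φ (indicatorLinfty (⋃ i, S i)))) :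
    ∃ x₀ : X, ∀ f : lp (fun _ : X => ℂ) ∞, φ f = f x₀ := by
  obtain ⟨x₀, hx₀⟩ := exists_map_indicatorLinfty_singleton_ne_zero
    (hasSum_indicatorLinfty_singleton_of_completelyAdditive φ hadd)
  exact ⟨x₀, apply_eq_of_map_indicatorLinfty_singleton (map_indicatorLinfty_eq_one hx₀)⟩
end
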